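/- For all x, y ∈ B², j*_{B²}(x,y) ≤ w_{B²}(x,y) ≤ √2·j*_{B²}(x,y), with equality in the first inequality when x, y lie on the same ray from the origin; moreover the constant √2 is sharp: for x = 1−k, y = (1−k)e^{2ki}, the quotient w_{B²}(x,y)/j*_{B²}(x,y) = ((1−k)sin k + k)/√(k² + (1−k²)sin²k) tends to √2 as k → 0⁺. -/

import Mathlib

/-!
Write `ỹ = y + ((2 - 2|y|) / |y|) y`. Expanding `|x - ỹ|²` and bounding `⟪x, y⟫ ≤ |x| |y|` gives
`|x - ỹ|² ≥ |x - y|² + 4 (1 - |x|) (1 - |y|)`, so with `m = min (1 - |x|) (1 - |y|)`,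
`(|x - y| + 2m)² ≤ 2 (|x - y|² + 4m²) ≤ 2 |x - ỹ|²`: this is `w ≤ √2 j*`. In the other direction
`|x - ỹ| ≤ |x - y| + |y - ỹ| = |x - y| + 2 (1 - |y|)` gives `j* ≤ w`. When `x` and `y` lie on
a ray through the origin, so do `x̃` and `ỹ`, every distance involved is a difference of norms,
and both quotients equal `|x - y| / (2 - |x| - |y|)`. For sharpness, `sin k = k sinc k` turns
the explicit quotient into a function continuous at `0` with value `√2`.
-/

open Metric Set

/-- `x̃ = x(2−|x|)/|x|`. -/
noncomputable def tilde (x : ℂ) : ℂ := (((2 - ‖x‖) / ‖x‖ : ℝ) : ℂ) * x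

/-- The quasi-metric `w` of the unit disk. -/
noncomputable def wB (x y : ℂ) : ℝ :=
  if x = 0 then ‖y‖ / (2 - ‖y‖)
  else if y = 0 then ‖x‖ / (2 - ‖x‖)
  else ‖x - y‖ / min (‖x - tilde y‖) (‖y - tilde x‖)

/-- The `j*` metric of the unit disk. -/
noncomputable def jB (x y : ℂ) : ℝ :=
  ‖x - y‖ /
    (‖x - y‖ + 2 * min (1 - ‖x‖) (1 - ‖y‖))

open Complex

lemma tilde_eq_smul (y : ℂ) : tilde y = ((2 - ‖y‖) / ‖y‖) • y := by
  rw [tilde, Complex.real_smul]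

lemma SameRay.tilde_right {x y : ℂ} (h : SameRay ℝ x y) (hy : ‖y‖ ≤ 2) :
    SameRay ℝ x (tilde y) := by
  rw [tilde_eq_smul]
  exact h.nonneg_smul_right (div_nonneg (by linarith) (norm_nonneg y))

lemma norm_tilde {y : ℂ} (hy0 : y ≠ 0) (hy : ‖y‖ ≤ 2) : ‖tilde y‖ = 2 - ‖y‖ := by
  rw [tilde_eq_smul, norm_smul, Real.norm_eq_abs, abs_of_nonneg (div_nonneg (by linarith)
    (norm_nonneg y)), div_mul_cancel₀ _ (norm_ne_zero_iff.2 hy0)]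

lemma SameRay.norm_sub_tilde {x y : ℂ} (h : SameRay ℝ x y) (hy0 : y ≠ 0)
    (hxy : ‖x‖ + ‖y‖ ≤ 2) : ‖x - tilde y‖ = 2 - ‖x‖ - ‖y‖ := by
  have hy : ‖y‖ ≤ 2 := by linarith [norm_nonneg x]
  rw [(h.tilde_right hy).norm_sub, norm_tilde hy0 hy, abs_of_nonpos (by linarith)]
  ring

lemma norm_sub_tilde_le {x y : ℂ} (hy0 : y ≠ 0) (hy : ‖y‖ ≤ 1) :
    ‖x - tilde y‖ ≤ ‖x - y‖ + 2 * (1 - ‖y‖) := by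
  have hyy : ‖y - tilde y‖ = 2 - 2 * ‖y‖ := by
    rw [SameRay.rfl.norm_sub_tilde hy0 (by linarith)]; ring
  linarith [norm_sub_le_norm_sub_add_norm_sub x y (tilde y)]

lemma sq_norm_sub_add_le_sq_norm_sub_tilde {x y : ℂ} (hy0 : y ≠ 0) (hy : ‖y‖ ≤ 1) :
    ‖x - y‖ ^ 2 + 4 * (1 - ‖x‖) * (1 - ‖y‖) ≤ ‖x - tilde y‖ ^ 2 := by
  have hs : 0 < ‖y‖ := norm_pos_iff.2 hy0
  set t := (2 - ‖y‖) / ‖y‖ with ht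
  have hts : t * ‖y‖ = 2 - ‖y‖ := div_mul_cancel₀ _ hs.ne'
  have ht1 : 0 ≤ t - 1 := by rw [ht, sub_nonneg, one_le_div hs]; linarith
  have hinner : (t - 1) * inner ℝ x y ≤ ‖x‖ * (2 - 2 * ‖y‖) :=
    calc (t - 1) * inner ℝ x y ≤ (t - 1) * (‖x‖ * ‖y‖) :=
          mul_le_mul_of_nonneg_left (real_inner_le_norm x y) ht1
      _ = ‖x‖ * (2 - 2 * ‖y‖) := by linear_combination ‖x‖ * hts
  rw [tilde_eq_smul, ← ht, norm_sub_sq_real, norm_sub_sq_real, inner_smul_right, norm_smul,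
    Real.norm_eq_abs, abs_of_nonneg (by linarith), hts]
  linarith

lemma add_two_mul_min_le_sqrt_two_mul_norm_sub_tilde {x y : ℂ} (hy0 : y ≠ 0)
    (hx : ‖x‖ ≤ 1) (hy : ‖y‖ ≤ 1) :
    ‖x - y‖ + 2 * min (1 - ‖x‖) (1 - ‖y‖) ≤ √2 * ‖x - tilde y‖ := by
  set m := min (1 - ‖x‖) (1 - ‖y‖)
  have hm0 : 0 ≤ m := le_min (by linarith) (by linarith)
  have hm_sq : m ^ 2 ≤ (1 - ‖x‖) * (1 - ‖y‖) :=
    pow_two m ▸ mul_le_mul (min_le_left _ _) (min_le_right _ _) hm0 (by linarith)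
  have hsq := sq_norm_sub_add_le_sq_norm_sub_tilde (x := x) hy0 hy
  refine (pow_le_pow_iff_left₀ (by positivity) (by positivity) two_ne_zero).1 ?_
  rw [mul_pow, Real.sq_sqrt zero_le_two]
  nlinarith [sq_nonneg (‖x - y‖ - 2 * m)]

lemma norm_sub_tilde_pos {x y : ℂ} (hy0 : y ≠ 0) (hx : ‖x‖ < 1) (hy : ‖y‖ < 1) :
    0 < ‖x - tilde y‖ := by
  have hsq := sq_norm_sub_add_le_sq_norm_sub_tilde (x := x) hy0 hy.le
  have : 0 < (1 - ‖x‖) * (1 - ‖y‖) := mul_pos (by linarith) (by linarith)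
  exact lt_of_pow_lt_pow_left₀ 2 (norm_nonneg _) (by nlinarith [sq_nonneg ‖x - y‖])

lemma jB_comm (x y : ℂ) : jB x y = jB y x := by
  rw [jB, jB, norm_sub_rev, min_comm]

lemma jB_nonneg {x y : ℂ} (hx : ‖x‖ ≤ 1) (hy : ‖y‖ ≤ 1) : 0 ≤ jB x y := by
  have : 0 ≤ min (1 - ‖x‖) (1 - ‖y‖) := le_min (by linarith) (by linarith)
  exact div_nonneg (norm_nonneg _) (by positivity)

lemma jB_zero_left (y : ℂ) : jB 0 y = ‖y‖ / (2 - ‖y‖) := by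
  rw [jB, zero_sub, norm_neg, norm_zero, min_eq_right (by linarith [norm_nonneg y])]
  ring_nf

lemma wB_zero_right (x : ℂ) : wB x 0 = ‖x‖ / (2 - ‖x‖) := by
  by_cases hx : x = 0 <;> simp [wB, hx]

lemma jB_eq_wB_of_eq_zero_or_eq_zero {x y : ℂ} (h : x = 0 ∨ y = 0) : jB x y = wB x y := by
  rcases h with rfl | rfl
  · rw [jB_zero_left, wB, if_pos rfl]
  · rw [jB_comm, jB_zero_left, wB_zero_right]

lemma jB_le_wB_and_wB_le_sqrt_two_mul_jB {x y : ℂ} (hx0 : x ≠ 0) (hy0 : y ≠ 0)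
    (hx : ‖x‖ < 1) (hy : ‖y‖ < 1) : jB x y ≤ wB x y ∧ wB x y ≤ √2 * jB x y := by
  have hM0 : 0 < min ‖x - tilde y‖ ‖y - tilde x‖ :=
    lt_min (norm_sub_tilde_pos hy0 hx hy) (norm_sub_tilde_pos hx0 hy hx)
  have hM_le : min ‖x - tilde y‖ ‖y - tilde x‖ ≤ ‖x - y‖ + 2 * min (1 - ‖x‖) (1 - ‖y‖) := by
    rcases le_total (1 - ‖y‖) (1 - ‖x‖) with h | h
    · rw [min_eq_right h]
      exact (min_le_left _ _).trans (norm_sub_tilde_le hy0 hy.le)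
    · rw [min_eq_left h, norm_sub_rev x y]
      exact (min_le_right _ _).trans (norm_sub_tilde_le hx0 hx.le)
  have hle_M : ‖x - y‖ + 2 * min (1 - ‖x‖) (1 - ‖y‖) ≤
      √2 * min ‖x - tilde y‖ ‖y - tilde x‖ := by
    rw [mul_min_of_nonneg _ _ (Real.sqrt_nonneg 2)]
    refine le_min (add_two_mul_min_le_sqrt_two_mul_norm_sub_tilde hy0 hx.le hy.le) ?_
    rw [norm_sub_rev x y, min_comm]
    exact add_two_mul_min_le_sqrt_two_mul_norm_sub_tilde hx0 hy.le hx.le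
  have hsqrt2 : 0 < √2 := by positivity
  rw [wB, if_neg hx0, if_neg hy0, jB]
  refine ⟨div_le_div_of_nonneg_left (norm_nonneg _) hM0 hM_le, ?_⟩
  calc ‖x - y‖ / min ‖x - tilde y‖ ‖y - tilde x‖
      ≤ ‖x - y‖ / ((‖x - y‖ + 2 * min (1 - ‖x‖) (1 - ‖y‖)) / √2) :=
        div_le_div_of_nonneg_left (norm_nonneg _) (div_pos (hM0.trans_le hM_le) hsqrt2)
          ((div_le_iff₀' hsqrt2).2 hle_M)
    _ = √2 * (‖x - y‖ / (‖x - y‖ + 2 * min (1 - ‖x‖) (1 - ‖y‖))) := by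
        rw [div_div_eq_mul_div, mul_div_assoc', mul_comm]

lemma jB_eq_wB_of_sameRay {x y : ℂ} (hx0 : x ≠ 0) (hy0 : y ≠ 0) (hx : ‖x‖ < 1) (hy : ‖y‖ < 1)
    (h : SameRay ℝ x y) : jB x y = wB x y := by
  have hxy : ‖x‖ + ‖y‖ ≤ 2 := by linarith
  have hden : |‖x‖ - ‖y‖| + 2 * min (1 - ‖x‖) (1 - ‖y‖) = 2 - ‖x‖ - ‖y‖ := by
    rcases le_total ‖x‖ ‖y‖ with hle | hle
    · rw [abs_of_nonpos (by linarith), min_eq_right (by linarith)]; ring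
    · rw [abs_of_nonneg (by linarith), min_eq_left (by linarith)]; ring
  rw [jB, wB, if_neg hx0, if_neg hy0, h.norm_sub, hden, h.norm_sub_tilde hy0 hxy,
    h.symm.norm_sub_tilde hx0 (by linarith), sub_right_comm 2 ‖y‖, min_self]

lemma sq_norm_ofReal_sub_mul_exp (p q k : ℝ) :
    ‖(p : ℂ) - q * exp ((2 * k : ℝ) * I)‖ ^ 2 = (p - q) ^ 2 + 4 * p * q * Real.sin k ^ 2 := by
  rw [Complex.sq_norm, normSq_apply]
  simp only [sub_re, sub_im, mul_re, mul_im, ofReal_re, ofReal_im, exp_ofReal_mul_I_re,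
    exp_ofReal_mul_I_im, Real.cos_two_mul, Real.sin_two_mul]
  linear_combination (4 * q ^ 2 * Real.cos k ^ 2 - 4 * p * q) * Real.sin_sq_add_cos_sq k

lemma wB_div_jB_ofReal_mul_exp {k : ℝ} (hk0 : 0 < k) (hk1 : k < 1) :
    wB ((1 - k : ℝ) : ℂ) (((1 - k : ℝ) : ℂ) * exp ((2 * k : ℝ) * I)) /
        jB ((1 - k : ℝ) : ℂ) (((1 - k : ℝ) : ℂ) * exp ((2 * k : ℝ) * I))
      = ((1 - k) * Real.sin k + k) / √(k ^ 2 + (1 - k ^ 2) * Real.sin k ^ 2) := by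
  set e := exp ((2 * k : ℝ) * I)
  have hρ : 0 < 1 - k := by linarith
  have hsin : 0 < Real.sin k := Real.sin_pos_of_pos_of_lt_pi hk0 (by linarith [Real.pi_gt_three])
  have hu : 0 < k ^ 2 + (1 - k ^ 2) * Real.sin k ^ 2 := by
    have : 0 < 1 - k ^ 2 := by nlinarith
    positivity
  have hx0 : ((1 - k : ℝ) : ℂ) ≠ 0 := ofReal_ne_zero.2 hρ.ne'
  have hy0 : ((1 - k : ℝ) : ℂ) * e ≠ 0 := mul_ne_zero hx0 (exp_ne_zero _)
  have hnx : ‖((1 - k : ℝ) : ℂ)‖ = 1 - k := by rw [norm_real, Real.norm_of_nonneg hρ.le]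
  have hny : ‖((1 - k : ℝ) : ℂ) * e‖ = 1 - k := by
    rw [norm_mul, hnx, norm_exp_ofReal_mul_I, mul_one]
  have htx : tilde ((1 - k : ℝ) : ℂ) = ((1 + k : ℝ) : ℂ) := by
    rw [tilde, hnx, ← ofReal_mul, div_mul_cancel₀ _ hρ.ne']; ring_nf
  have hty : tilde (((1 - k : ℝ) : ℂ) * e) = ((1 + k : ℝ) : ℂ) * e := by
    rw [tilde, hny, ← mul_assoc, ← ofReal_mul, div_mul_cancel₀ _ hρ.ne']; ring_nf
  have hnorm {z : ℂ} {c : ℝ} (hc : 0 ≤ c) (h : ‖z‖ ^ 2 = c ^ 2) : ‖z‖ = c :=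
    (pow_left_inj₀ (norm_nonneg z) hc two_ne_zero).1 h
  have ha : ‖((1 - k : ℝ) : ℂ) - ((1 - k : ℝ) : ℂ) * e‖ = 2 * (1 - k) * Real.sin k :=
    hnorm (by positivity) (by rw [sq_norm_ofReal_sub_mul_exp]; ring)
  have hd : ‖((1 - k : ℝ) : ℂ) - tilde (((1 - k : ℝ) : ℂ) * e)‖
      = 2 * √(k ^ 2 + (1 - k ^ 2) * Real.sin k ^ 2) :=
    hnorm (by positivity) (by
      rw [hty, sq_norm_ofReal_sub_mul_exp, mul_pow, Real.sq_sqrt hu.le]; ring)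
  have hd' : ‖((1 - k : ℝ) : ℂ) * e - tilde ((1 - k : ℝ) : ℂ)‖
      = 2 * √(k ^ 2 + (1 - k ^ 2) * Real.sin k ^ 2) :=
    hnorm (by positivity) (by
      rw [htx, norm_sub_rev, sq_norm_ofReal_sub_mul_exp, mul_pow, Real.sq_sqrt hu.le]; ring)
  rw [wB, if_neg hx0, if_neg hy0, jB, ha, hd, hd', hnx, hny, min_self, min_self]
  field_simp
  ring

lemma one_sub_mul_sin_add_self_div_sqrt_eq_sinc {k : ℝ} (hk : 0 < k) :
    ((1 - k) * Real.sin k + k) / √(k ^ 2 + (1 - k ^ 2) * Real.sin k ^ 2)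
      = ((1 - k) * Real.sinc k + 1) / √(1 + (1 - k ^ 2) * Real.sinc k ^ 2) := by
  have hsin : Real.sin k = k * Real.sinc k := by
    rw [Real.sinc_of_ne_zero hk.ne', mul_div_cancel₀ _ hk.ne']
  have hrad : k ^ 2 + (1 - k ^ 2) * (k * Real.sinc k) ^ 2
      = k ^ 2 * (1 + (1 - k ^ 2) * Real.sinc k ^ 2) := by ring
  have hnum : ((1 - k) * (k * Real.sinc k) + k) / k = (1 - k) * Real.sinc k + 1 := by
    field_simp
  rw [hsin, hrad, Real.sqrt_mul (sq_nonneg k), Real.sqrt_sq hk.le, ← div_div, hnum]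

lemma tendsto_one_sub_mul_sin_add_self_div_sqrt :
    Filter.Tendsto
      (fun k : ℝ => ((1 - k) * Real.sin k + k) / √(k ^ 2 + (1 - k ^ 2) * Real.sin k ^ 2))
      (nhdsWithin 0 (Set.Ioi 0)) (nhds √2) := by
  have hcont : Filter.Tendsto
      (fun k : ℝ => ((1 - k) * Real.sinc k + 1) / √(1 + (1 - k ^ 2) * Real.sinc k ^ 2))
      (nhds 0) (nhds (((1 - 0) * Real.sinc 0 + 1) / √(1 + (1 - 0 ^ 2) * Real.sinc 0 ^ 2))) :=
    ((by fun_prop : Continuous fun k : ℝ => (1 - k) * Real.sinc k + 1).continuousAt.div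
      (by fun_prop : Continuous fun k : ℝ => √(1 + (1 - k ^ 2) * Real.sinc k ^ 2)).continuousAt
      (by norm_num))
  norm_num [Real.div_sqrt] at hcont
  refine (hcont.mono_left nhdsWithin_le_nhds).congr' ?_
  filter_upwards [self_mem_nhdsWithin] with k hk
  exact (one_sub_mul_sin_add_self_div_sqrt_eq_sinc hk).symm

/-- For all `x, y ∈ B²`, `j* ≤ w ≤ √2 j*`, with equality `j* = w` on rays through the
origin; the constant `√2` is sharp: for `x = 1−k`, `y = (1−k)e^{2ki}`, the quotient
`w/j*` equals `((1−k)sin k + k)/√(k² + (1−k²)sin²k)` and tends to `√2` as `k → 0⁺`. -/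
theorem j_le_w_le_sqrt_two_j :
    (∀ x y : ℂ, x ∈ Metric.ball (0 : ℂ) 1 → y ∈ Metric.ball (0 : ℂ) 1 →
      jB x y ≤ wB x y ∧ wB x y ≤ Real.sqrt 2 * jB x y) ∧
    (∀ x y : ℂ, x ∈ Metric.ball (0 : ℂ) 1 → y ∈ Metric.ball (0 : ℂ) 1 →
      SameRay ℝ x y → jB x y = wB x y) ∧
    (∀ k : ℝ, 0 < k → k < 1 →
      wB ((1 - k : ℝ) : ℂ) (((1 - k : ℝ) : ℂ) * Complex.exp ((2 * k : ℝ) * Complex.I)) /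
        jB ((1 - k : ℝ) : ℂ) (((1 - k : ℝ) : ℂ) * Complex.exp ((2 * k : ℝ) * Complex.I))
      = ((1 - k) * Real.sin k + k) / Real.sqrt (k ^ 2 + (1 - k ^ 2) * Real.sin k ^ 2)) ∧
    Filter.Tendsto (fun k : ℝ =>
        wB ((1 - k : ℝ) : ℂ) (((1 - k : ℝ) : ℂ) * Complex.exp ((2 * k : ℝ) * Complex.I)) /
          jB ((1 - k : ℝ) : ℂ) (((1 - k : ℝ) : ℂ) * Complex.exp ((2 * k : ℝ) * Complex.I)))
      (nhdsWithin 0 (Set.Ioi 0)) (nhds (Real.sqrt 2)) := by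
  refine ⟨fun x y hx hy => ?_, fun x y hx hy hxy => ?_, fun k => wB_div_jB_ofReal_mul_exp, ?_⟩
  · rw [mem_ball_zero_iff] at hx hy
    by_cases h0 : x = 0 ∨ y = 0
    · rw [← jB_eq_wB_of_eq_zero_or_eq_zero h0]
      have := jB_nonneg hx.le hy.le
      exact ⟨le_rfl, le_mul_of_one_le_left this Real.one_lt_sqrt_two.le⟩
    · obtain ⟨hx0, hy0⟩ := not_or.1 h0
      exact jB_le_wB_and_wB_le_sqrt_two_mul_jB hx0 hy0 hx hy
  · rw [mem_ball_zero_iff] at hx hy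
    by_cases h0 : x = 0 ∨ y = 0
    · exact jB_eq_wB_of_eq_zero_or_eq_zero h0
    · obtain ⟨hx0, hy0⟩ := not_or.1 h0
      exact jB_eq_wB_of_sameRay hx0 hy0 hx hy hxy
  · refine tendsto_one_sub_mul_sin_add_self_div_sqrt.congr' ?_
    filter_upwards [Ioo_mem_nhdsGT zero_lt_one] with k hk
    exact (wB_div_jB_ofReal_mul_exp hk.1 hk.2).symm
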